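/- arXiv:math/0607069 — 2 statements merged into one kernel-verified Lean document; each statement's English description precedes it below -/
import Mathlib

section
/- For a Weyl group element w with reduced decomposition w = s_1 s_2 ⋯ s_k in simple reflections, the operator ∂_w obeys the generalized product rule ∂_w(u v) = Σ_{w' ≤ w} w'(∂_{w/w'}(u)) · ∂_{w'}(v) for all u, v ∈ S_k, where the sum is over elements w' below w in Bruhat order and ∂_{w/w'} = (w')^{-1} Σ_t φ(s,t), summed over reduced subwords t = (t_1,…,t_l) of s = (s_1,…,s_k) with w' = t_1⋯t_l, and φ(s,t) = φ_1⋯φ_k with φ_j = s_j if s_j ∈ t and φ_j = ∂_{s_j} otherwise. -/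
open MvPolynomial

/-- The linear polynomial in `Sym(X(T)) ≅ ℤ[x₁,…,x_r]` corresponding to a lattice
element `v ∈ X(T) ≅ ℤ^r`. -/
noncomputable def lin {r : ℕ} (v : Fin r → ℤ) : MvPolynomial (Fin r) ℤ :=
  ∑ i, C (v i) * X i

/-- The algebra endomorphism of `Sym(X(T))` induced by a lattice endomorphism. -/
noncomputable def act {r : ℕ} (σ : Module.End ℤ (Fin r → ℤ)) :
    MvPolynomial (Fin r) ℤ →ₐ[ℤ] MvPolynomial (Fin r) ℤ :=
  aeval fun i => lin (σ (Pi.single i 1))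

/-- A (reduced, crystallographic) root system datum in the character lattice
`X(T) ≅ ℤ^r`: roots, a positive system, a simple system, and integral coroots. -/
structure RootSystemData (r : ℕ) where
  R : Finset (Fin r → ℤ)
  pos : Finset (Fin r → ℤ)
  simple : Finset (Fin r → ℤ)
  coroot : (Fin r → ℤ) → ((Fin r → ℤ) →ₗ[ℤ] ℤ)
  ne_zero : ∀ α ∈ R, α ≠ (0 : Fin r → ℤ)
  coroot_self : ∀ α ∈ R, coroot α α = 2
  neg_mem : ∀ α ∈ R, -α ∈ R
  reduced : ∀ α ∈ R, (2 : ℤ) • α ∉ R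
  pos_subset : pos ⊆ R
  pos_total : ∀ α ∈ R, α ∈ pos ∨ -α ∈ pos
  pos_asymm : ∀ α ∈ pos, -α ∉ pos
  simple_subset : simple ⊆ pos
  simple_indep : LinearIndependent ℤ ((↑) : {x : Fin r → ℤ // x ∈ simple} → (Fin r → ℤ))
  simple_gen : ∀ α ∈ pos, ∃ c : (Fin r → ℤ) → ℕ, α = ∑ β ∈ simple, c β • β
  root_perm : ∀ α ∈ R, ∀ β ∈ R, β - coroot α β • α ∈ R

/-- The reflection `s_α : v ↦ v - ⟨v,α^∨⟩α` of the lattice associated to a root. -/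
noncomputable def reflL {r : ℕ} (P : RootSystemData r) (α : Fin r → ℤ) :
    Module.End ℤ (Fin r → ℤ) :=
  LinearMap.id - LinearMap.smulRight (P.coroot α) α

/-- The Weyl group `W`, i.e. the monoid of lattice endomorphisms generated by all
the reflections `s_α`, `α ∈ R` (each reflection is an involution, so this is in
fact a group). -/
def weyl {r : ℕ} (P : RootSystemData r) : Submonoid (Module.End ℤ (Fin r → ℤ)) :=
  Submonoid.closure ((fun α => reflL P α) '' ↑P.R)

/-- The length `ℓ(σ)` of a Weyl group element: the minimal length of a word in the
simple reflections representing it. -/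
noncomputable def len {r : ℕ} (P : RootSystemData r) (σ : Module.End ℤ (Fin r → ℤ)) : ℕ :=
  sInf {n | ∃ l : List (Fin r → ℤ), (∀ β ∈ l, β ∈ P.simple) ∧
    (l.map (reflL P)).prod = σ ∧ l.length = n}

/-- The linear polynomial in `S_k = Sym(X(T)) ⊗ k` corresponding to a lattice element. -/
noncomputable def link {r : ℕ} (k : Type) [CommRing k] (v : Fin r → ℤ) :
    MvPolynomial (Fin r) k :=
  ∑ i, C ((v i : ℤ) : k) * X i

/-- The algebra endomorphism of `S_k` induced by a lattice endomorphism. -/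
noncomputable def actk {r : ℕ} (k : Type) [CommRing k] (σ : Module.End ℤ (Fin r → ℤ)) :
    MvPolynomial (Fin r) k →ₐ[k] MvPolynomial (Fin r) k :=
  aeval fun i => link k (σ (Pi.single i 1))

/-- The base-change map `S = Sym(X(T)) → S_k = Sym(X(T)) ⊗ k`. -/
noncomputable def ιk {r : ℕ} (k : Type) [CommRing k] :
    MvPolynomial (Fin r) ℤ →+* MvPolynomial (Fin r) k :=
  MvPolynomial.map (Int.castRingHom k)
-- lin nonzero
lemma lin_coeff {r : ℕ} (v : Fin r → ℤ) (i : Fin r) :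
    coeff (Finsupp.single i 1) (lin v) = v i := by
  have h : ∀ x : Fin r, coeff (Finsupp.single i 1) (C (v x) * X x)
      = if x = i then v x else 0 := by
    intro x
    rw [coeff_C_mul, coeff_X']
    by_cases h : x = i
    · subst h; simp
    · simp [h, Finsupp.single_left_inj (one_ne_zero (α := ℕ))]
  rw [lin, MvPolynomial.coeff_sum, Finset.sum_congr rfl fun x _ => h x]
  simp

lemma lin_ne_zero {r : ℕ} {v : Fin r → ℤ} (hv : v ≠ 0) : lin v ≠ 0 := by
  intro h
  apply hv
  funext i
  have := lin_coeff v i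
  rw [h] at this
  simpa using this.symm

-- compat of actk with act
lemma actk_ιk {r : ℕ} (k : Type) [CommRing k] (σ : Module.End ℤ (Fin r → ℤ))
    (u : MvPolynomial (Fin r) ℤ) : actk k σ (ιk k u) = ιk k (act σ u) := by
  induction u using MvPolynomial.induction_on with
  | C a => simp [ιk, act, actk]
  | add p q hp hq => simp [hp, hq]
  | mul_X p i hp =>
    have hX : (actk k σ) ((ιk k) (X i)) = (ιk k) ((act σ) (X i)) := by
      simp [ιk, actk, act, lin, link]
    rw [map_mul, map_mul, map_mul, map_mul, hp, hX]

-- Leibniz over ℤ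
lemma leibnizZ {r : ℕ} (P : RootSystemData r)
    (D : (Fin r → ℤ) → MvPolynomial (Fin r) ℤ → MvPolynomial (Fin r) ℤ)
    (hD : ∀ γ ∈ P.R, ∀ u, lin γ * D γ u = u - act (reflL P γ) u)
    {γ : Fin r → ℤ} (hγ : γ ∈ P.R) (u v : MvPolynomial (Fin r) ℤ) :
    D γ (u * v) = D γ u * v + act (reflL P γ) u * D γ v := by
  apply mul_left_cancel₀ (lin_ne_zero (P.ne_zero γ hγ))
  have h1 := hD γ hγ (u * v)
  have h2 := hD γ hγ u
  have h3 := hD γ hγ v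
  have h4 : lin γ * (D γ u * v + act (reflL P γ) u * D γ v)
      = (lin γ * D γ u) * v + act (reflL P γ) u * (lin γ * D γ v) := by ring
  rw [h1, h4, h2, h3, map_mul]
  ring

-- Leibniz over k
lemma leibnizK {r : ℕ} (P : RootSystemData r) (k : Type) [CommRing k]
    (D : (Fin r → ℤ) → MvPolynomial (Fin r) ℤ → MvPolynomial (Fin r) ℤ)
    (hD : ∀ γ ∈ P.R, ∀ u, lin γ * D γ u = u - act (reflL P γ) u)
    (Dk : (Fin r → ℤ) → Module.End k (MvPolynomial (Fin r) k))
    (hcompat : ∀ γ ∈ P.R, ∀ u : MvPolynomial (Fin r) ℤ,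
      Dk γ (ιk k u) = ιk k (D γ u))
    {γ : Fin r → ℤ} (hγ : γ ∈ P.R) (u v : MvPolynomial (Fin r) k) :
    Dk γ (u * v) = Dk γ u * v + actk k (reflL P γ) u * Dk γ v := by
  have base : ∀ u' v' : MvPolynomial (Fin r) ℤ,
      Dk γ (ιk k u' * ιk k v') = Dk γ (ιk k u') * ιk k v'
        + actk k (reflL P γ) (ιk k u') * Dk γ (ιk k v') := by
    intro u' v'
    rw [← map_mul, hcompat γ hγ, hcompat γ hγ, hcompat γ hγ, actk_ιk,
      leibnizZ P D hD hγ, map_add, map_mul, map_mul]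
  have mono : ∀ (a : Fin r →₀ ℕ) (c : k),
      (monomial a c : MvPolynomial (Fin r) k) = c • ιk k (monomial a 1) := by
    intro a c
    simp [ιk, MvPolynomial.smul_monomial]
  induction u using MvPolynomial.induction_on' with
  | add p q hp hq => rw [add_mul, map_add, map_add, map_add, hp, hq]; ring
  | monomial a c =>
    induction v using MvPolynomial.induction_on' with
    | add p q hp hq => rw [mul_add, map_add, map_add, hp, hq]; ring
    | monomial b d =>
      rw [mono a c, mono b d, smul_mul_smul_comm, map_smul, map_smul, map_smul,
        map_smul, base, smul_mul_smul_comm, smul_mul_smul_comm, smul_add]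

lemma mainlem {r : ℕ} (P : RootSystemData r) (k : Type) [CommRing k]
    (Dk : (Fin r → ℤ) → Module.End k (MvPolynomial (Fin r) k))
    (leib : ∀ γ ∈ P.R, ∀ u v : MvPolynomial (Fin r) k,
      Dk γ (u * v) = Dk γ u * v + actk k (reflL P γ) u * Dk γ v) :
    ∀ (n : ℕ) (s : Fin n → (Fin r → ℤ)), (∀ j, s j ∈ P.R) →
      ∀ u v : MvPolynomial (Fin r) k,
      ((List.ofFn fun j => Dk (s j)).prod : Module.End k (MvPolynomial (Fin r) k)) (u * v)
        = ∑ f : Fin n → Bool,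
            ((List.ofFn fun j => if f j then (actk k (reflL P (s j))).toLinearMap
                else Dk (s j)).prod : Module.End k (MvPolynomial (Fin r) k)) u
              * ((List.ofFn fun j => if f j then Dk (s j)
                else 1).prod : Module.End k (MvPolynomial (Fin r) k)) v := by
  intro n
  induction n with
  | zero =>
    intro s hs u v
    simp [List.ofFn_zero, Fintype.sum_unique]
  | succ n ih =>
    intro s hs u v
    have hLHS : ((List.ofFn fun j => Dk (s j)).prod :
        Module.End k (MvPolynomial (Fin r) k)) (u * v)
        = Dk (s 0) (((List.ofFn fun j : Fin n => Dk (s j.succ)).prod :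
            Module.End k (MvPolynomial (Fin r) k)) (u * v)) := by
      rw [List.ofFn_succ, List.prod_cons, Module.End.mul_apply]
    rw [hLHS, ih (fun j => s j.succ) (fun j => hs j.succ), map_sum]
    have hconv : (∑ f : Fin (n+1) → Bool,
        ((List.ofFn fun j => if f j then (actk k (reflL P (s j))).toLinearMap
            else Dk (s j)).prod : Module.End k (MvPolynomial (Fin r) k)) u
          * ((List.ofFn fun j => if f j then Dk (s j)
            else 1).prod : Module.End k (MvPolynomial (Fin r) k)) v)
        = ∑ p : Bool × (Fin n → Bool),
          ((List.ofFn fun j => if (Fin.cons p.1 p.2 : Fin (n+1) → Bool) j then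
              (actk k (reflL P (s j))).toLinearMap
              else Dk (s j)).prod : Module.End k (MvPolynomial (Fin r) k)) u
            * ((List.ofFn fun j => if (Fin.cons p.1 p.2 : Fin (n+1) → Bool) j then Dk (s j)
              else 1).prod : Module.End k (MvPolynomial (Fin r) k)) v := by
      refine (Fintype.sum_equiv (Fin.consEquiv fun _ => Bool) _ _ ?_).symm
      intro p
      rfl
    rw [hconv]
    rw [Fintype.sum_prod_type, Fintype.sum_bool]
    have htrue : ∀ f : Fin n → Bool,
        ((List.ofFn fun j : Fin (n+1) => if (Fin.cons true f : Fin (n+1) → Bool) j then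
            (actk k (reflL P (s j))).toLinearMap else Dk (s j)).prod :
              Module.End k (MvPolynomial (Fin r) k)) u
          * ((List.ofFn fun j : Fin (n+1) => if (Fin.cons true f : Fin (n+1) → Bool) j then Dk (s j)
            else 1).prod : Module.End k (MvPolynomial (Fin r) k)) v
        = (actk k (reflL P (s 0)))
            (((List.ofFn fun j : Fin n => if f j then
              (actk k (reflL P (s j.succ))).toLinearMap else Dk (s j.succ)).prod :
                Module.End k (MvPolynomial (Fin r) k)) u)
          * Dk (s 0) (((List.ofFn fun j : Fin n => if f j then Dk (s j.succ)
            else 1).prod : Module.End k (MvPolynomial (Fin r) k)) v) := by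
      intro f
      rw [List.ofFn_succ, List.ofFn_succ, List.prod_cons, List.prod_cons]
      simp [Module.End.mul_apply]
    have hfalse : ∀ f : Fin n → Bool,
        ((List.ofFn fun j : Fin (n+1) => if (Fin.cons false f : Fin (n+1) → Bool) j then
            (actk k (reflL P (s j))).toLinearMap else Dk (s j)).prod :
              Module.End k (MvPolynomial (Fin r) k)) u
          * ((List.ofFn fun j : Fin (n+1) => if (Fin.cons false f : Fin (n+1) → Bool) j then Dk (s j)
            else 1).prod : Module.End k (MvPolynomial (Fin r) k)) v
        = Dk (s 0) (((List.ofFn fun j : Fin n => if f j then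
              (actk k (reflL P (s j.succ))).toLinearMap else Dk (s j.succ)).prod :
                Module.End k (MvPolynomial (Fin r) k)) u)
          * ((List.ofFn fun j : Fin n => if f j then Dk (s j.succ)
            else 1).prod : Module.End k (MvPolynomial (Fin r) k)) v := by
      intro f
      rw [List.ofFn_succ, List.ofFn_succ, List.prod_cons, List.prod_cons]
      simp [Module.End.mul_apply]
    simp only [htrue, hfalse]
    rw [← Finset.sum_add_distrib]
    apply Finset.sum_congr rfl
    intro f _
    exact (leib (s 0) (hs 0) _ _).trans (add_comm _ _)

/-- Generalized product rule.  Let `w = s_1 s_2 ⋯ s_k` be a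
reduced decomposition into simple reflections (word `s : Fin kk → simple roots`,
reducedness expressed by `kk = ℓ(w)`).  Then for all `u, v ∈ S_k`:
`∂_w(uv) = ∑_K φ_K(u) · ∂_K(v)`, where `K` ranges over the subsets of positions
(equivalently, over subwords `t` of `s`), `φ_K = φ_1 ⋯ φ_k` with `φ_j = s_j` if
`j ∈ K` and `φ_j = ∂_{s_j}` otherwise, and `∂_K = ∂_{t_1} ⋯ ∂_{t_l}` is the
composite of the divided differences along the subword (which vanishes when the
subword is not reduced).  Grouping the subwords `t` by their product
`w' = t_1⋯t_l ≤ w` (Bruhat order) yields exactly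
`∂_w(uv) = ∑_{w' ≤ w} w'(∂_{w/w'}(u)) ∂_{w'}(v)` with
`∂_{w/w'} = (w')⁻¹ ∑_t φ(s,t)`. -/
theorem statement9 {r kk : ℕ} (P : RootSystemData r) (k : Type) [CommRing k]
    (D : (Fin r → ℤ) → MvPolynomial (Fin r) ℤ → MvPolynomial (Fin r) ℤ)
    (hD : ∀ γ ∈ P.R, ∀ u, lin γ * D γ u = u - act (reflL P γ) u)
    (Dk : (Fin r → ℤ) → Module.End k (MvPolynomial (Fin r) k))
    (hcompat : ∀ γ ∈ P.R, ∀ u : MvPolynomial (Fin r) ℤ,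
      Dk γ (ιk k u) = ιk k (D γ u))
    (s : Fin kk → (Fin r → ℤ)) (hsimple : ∀ j, s j ∈ P.simple)
    (hreduced : kk = len P ((List.ofFn fun j => reflL P (s j)).prod))
    (u v : MvPolynomial (Fin r) k) :
    ((List.ofFn fun j => Dk (s j)).prod : Module.End k (MvPolynomial (Fin r) k)) (u * v)
      = ∑ K : Finset (Fin kk),
          ((List.ofFn fun j => if j ∈ K then (actk k (reflL P (s j))).toLinearMap
              else Dk (s j)).prod : Module.End k (MvPolynomial (Fin r) k)) u
            * ((List.ofFn fun j => if j ∈ K then Dk (s j)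
              else 1).prod : Module.End k (MvPolynomial (Fin r) k)) v := by
  have hsR : ∀ j, s j ∈ P.R := fun j => P.pos_subset (P.simple_subset (hsimple j))
  rw [mainlem P k Dk (fun γ hγ u v => leibnizK P k D hD Dk hcompat hγ u v) kk s hsR u v]
  refine Fintype.sum_equiv
    ⟨fun f => Finset.univ.filter (fun j => f j = true),
     fun K j => decide (j ∈ K), ?_, ?_⟩ _ _ ?_
  · intro f; funext j; simp
  · intro K; ext j; simp
  · intro f
    simp [Finset.mem_filter]
end

section
/- With ψ(u) = ∂_{w_0}(𝔖_{w_0} u) and J the left ideal of D_k generated by ψ and all elements 1 - w (w ∈ W), every left D_k-module A decomposes as A^W = A^{I(D_k)} ⊕ A^J, where A^J is the submodule annihilated by J. In particular A^W = A^{I(D_k)} if and only if A^J = 0. -/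
open MvPolynomial

set_option synthInstance.maxHeartbeats 1000000
set_option maxHeartbeats 1000000


section RootLemmas
variable {r : ℕ} (P : RootSystemData r)

lemma reflL_apply (α v : Fin r → ℤ) : reflL P α v = v - P.coroot α v • α := rfl

lemma reflL_self {α} (hα : α ∈ P.R) : reflL P α α = -α := by
  rw [reflL_apply, P.coroot_self α hα, two_smul]; abel

lemma reflL_invol {α} (hα : α ∈ P.R) : reflL P α * reflL P α = 1 := by
  apply LinearMap.ext; intro v
  have : (reflL P α * reflL P α) v = reflL P α (reflL P α v) := rfl
  rw [this, reflL_apply, reflL_apply]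
  simp only [map_sub, map_smul, P.coroot_self α hα, smul_eq_mul, Module.End.one_apply]
  have h2 : (P.coroot α) v - (P.coroot α) v * 2 = -((P.coroot α) v) := by ring
  rw [h2, neg_smul]
  abel

lemma reflL_mem {α} (hα : α ∈ P.R) : reflL P α ∈ weyl P :=
  Submonoid.subset_closure ⟨α, by simpa using hα, rfl⟩

lemma weyl_root {σ} (hσ : σ ∈ weyl P) : ∀ α ∈ P.R, σ α ∈ P.R := by
  induction hσ using Submonoid.closure_induction with
  | mem x hx =>
    obtain ⟨γ, hγ, rfl⟩ := hx
    intro α hα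
    rw [reflL_apply]
    exact P.root_perm γ (by simpa using hγ) α hα
  | one => simpa using fun α h => h
  | mul x y hx hy ihx ihy =>
    intro α hα
    have : (x * y) α = x (y α) := rfl
    rw [this]
    exact ihx _ (ihy _ hα)

lemma weyl_inv {σ} (hσ : σ ∈ weyl P) : ∃ τ ∈ weyl P, σ * τ = 1 ∧ τ * σ = 1 := by
  induction hσ using Submonoid.closure_induction with
  | mem x hx =>
    obtain ⟨γ, hγ, rfl⟩ := hx
    have hγ' : γ ∈ P.R := by simpa using hγ
    exact ⟨reflL P γ, reflL_mem P hγ', reflL_invol P hγ', reflL_invol P hγ'⟩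
  | one => exact ⟨1, one_mem _, one_mul 1, one_mul 1⟩
  | mul x y hx hy ihx ihy =>
    obtain ⟨x', hx', hxx', hx'x⟩ := ihx
    obtain ⟨y', hy', hyy', hy'y⟩ := ihy
    refine ⟨y' * x', mul_mem hy' hx', ?_, ?_⟩
    · calc x * y * (y' * x') = x * (y * y') * x' := by noncomm_ring
        _ = 1 := by rw [hyy', mul_one, hxx']
    · calc y' * x' * (x * y) = y' * (x' * x) * y := by noncomm_ring
        _ = 1 := by rw [hx'x, mul_one, hy'y]

end RootLemmas

section RootLemmas2
variable {r : ℕ} (P : RootSystemData r)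

lemma pow_formula {t : Module.End ℤ (Fin r → ℤ)} {γ : Fin r → ℤ}
    (htγ : t γ = γ) (hprop : ∀ v, ∃ c : ℤ, t v - v = c • γ) :
    ∀ (n : ℕ) (v), (t ^ n) v = v + n • (t v - v) := by
  intro n
  induction n with
  | zero => intro v; simp
  | succ n ih =>
    intro v
    have h1 : t (t v - v) = t v - v := by
      obtain ⟨c, hc⟩ := hprop v
      rw [hc, map_smul, htγ]
    calc (t ^ (n+1)) v = t ((t ^ n) v) := by rw [pow_succ']; rfl
      _ = t v + n • (t v - v) := by rw [ih v, map_add, map_nsmul, h1]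
      _ = v + (n+1) • (t v - v) := by rw [succ_nsmul]; abel

lemma weyl_fix (hfin : (weyl P : Set (Module.End ℤ (Fin r → ℤ))).Finite)
    {t : Module.End ℤ (Fin r → ℤ)} (ht : t ∈ weyl P) {γ : Fin r → ℤ}
    (htγ : t γ = γ) (hprop : ∀ v, ∃ c : ℤ, t v - v = c • γ) : t = 1 := by
  -- t has finite order
  have hnotinj : ¬ Function.Injective (fun n : ℕ => t ^ n) := by
    intro hinj
    exact (Set.infinite_of_injective_forall_mem hinj
      (fun n => (pow_mem ht n : t ^ n ∈ weyl P))) hfin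
  obtain ⟨a, b, hab, hne⟩ := Function.not_injective_iff.mp hnotinj
  obtain ⟨τ, hτ, htτ, hτt⟩ := weyl_inv P ht
  have hpowinv : ∀ n : ℕ, t ^ n * τ ^ n = 1 := by
    intro n
    induction n with
    | zero => simp
    | succ n ih =>
      rw [pow_succ' t, pow_succ τ, mul_assoc, ← mul_assoc (t ^ n), ih, one_mul, htτ]
  -- wlog a < b
  have key : ∀ a b : ℕ, a < b → t ^ a = t ^ b → t ^ (b - a) = 1 := by
    intro a b hlt heq
    have h1 : t ^ (b - a) * t ^ a = t ^ b := by
      rw [← pow_add, Nat.sub_add_cancel hlt.le]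
    have h2 : t ^ (b - a) = t ^ b * τ ^ a := by
      rw [← h1, mul_assoc, hpowinv, mul_one]
    rw [h2, ← heq, hpowinv]
  have hord : ∃ n : ℕ, 0 < n ∧ t ^ n = 1 := by
    rcases lt_or_gt_of_ne hne with h | h
    · exact ⟨b - a, by omega, key a b h hab⟩
    · exact ⟨a - b, by omega, key b a h hab.symm⟩
  obtain ⟨n, hn, hord⟩ := hord
  apply LinearMap.ext
  intro v
  have := pow_formula htγ hprop n v
  rw [hord] at this
  have h0 : (n : ℤ) • (t v - v) = 0 := by
    have : v = v + n • (t v - v) := this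
    have h := (left_eq_add.mp this)
    rwa [← Nat.cast_smul_eq_nsmul ℤ] at h
  have : t v - v = 0 := by
    rcases smul_eq_zero.mp h0 with h | h
    · exact absurd (by exact_mod_cast h) hn.ne'
    · exact h
  have : t v = v := by rwa [sub_eq_zero] at this
  simpa using this

lemma reflL_conj (hfin : (weyl P : Set (Module.End ℤ (Fin r → ℤ))).Finite)
    {u} (hu : u ∈ weyl P) {α} (hα : α ∈ P.R) :
    u * reflL P α = reflL P (u α) * u := by
  obtain ⟨u', hu', huu', hu'u⟩ := weyl_inv P hu
  have hu'mem : ∀ v, u (u' v) = v := by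
    intro v
    have h : u (u' v) = (u * u') v := rfl
    rw [h, huu']; rfl
  have hu'α : u' (u α) = α := by
    have h : u' (u α) = (u' * u) α := rfl
    rw [h, hu'u]; rfl
  have huα : u α ∈ P.R := weyl_root P hu α hα
  set t := reflL P (u α) * (u * reflL P α * u') with ht
  have htW : t ∈ weyl P :=
    mul_mem (reflL_mem P huα) (mul_mem (mul_mem hu (reflL_mem P hα)) hu')
  have happ : ∀ v, (u * reflL P α * u') v = v - P.coroot α (u' v) • (u α) := by
    intro v
    have h : (u * reflL P α * u') v = u (reflL P α (u' v)) := rfl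
    rw [h, reflL_apply, map_sub, map_smul, hu'mem]
  have htapp : ∀ v, t v = (v - P.coroot α (u' v) • u α)
      - P.coroot (u α) (v - P.coroot α (u' v) • u α) • u α := by
    intro v
    have h : t v = reflL P (u α) ((u * reflL P α * u') v) := rfl
    rw [h, happ, reflL_apply]
  have htfix : t = 1 := by
    apply weyl_fix P hfin htW (γ := u α)
    · rw [htapp, hu'α, P.coroot_self α hα, map_sub, map_smul,
        P.coroot_self (u α) huα]
      have h4 : ((2:ℤ) - (2:ℤ) • (2:ℤ)) = -2 := by norm_num
      rw [h4, neg_smul]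
      abel
    · intro v
      rw [htapp]
      exact ⟨-(P.coroot α (u' v)) - P.coroot (u α) (v - P.coroot α (u' v) • u α),
        by rw [sub_smul, neg_smul]; abel⟩
  have h2 : u * reflL P α * u' = reflL P (u α) := by
    calc u * reflL P α * u'
        = (reflL P (u α) * reflL P (u α)) * (u * reflL P α * u') := by
          rw [reflL_invol P huα, one_mul]
      _ = reflL P (u α) * t := by rw [ht, mul_assoc]
      _ = reflL P (u α) := by rw [htfix, mul_one]
  calc u * reflL P α = u * reflL P α * (u' * u) := by rw [hu'u, mul_one]
    _ = (u * reflL P α * u') * u := (mul_assoc _ _ _).symm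
    _ = reflL P (u α) * u := by rw [h2]

end RootLemmas2

section RootLemmas3
variable {r : ℕ} (P : RootSystemData r)

noncomputable def wprod (l : List (Fin r → ℤ)) : Module.End ℤ (Fin r → ℤ) :=
  (l.map (reflL P)).prod

lemma wprod_nil : wprod P [] = 1 := rfl

lemma wprod_cons (β : Fin r → ℤ) (l : List (Fin r → ℤ)) :
    wprod P (β :: l) = reflL P β * wprod P l := by
  simp [wprod]

lemma wprod_append (l₁ l₂ : List (Fin r → ℤ)) :
    wprod P (l₁ ++ l₂) = wprod P l₁ * wprod P l₂ := by
  simp [wprod]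

lemma wprod_mem {l : List (Fin r → ℤ)} (hl : ∀ β ∈ l, β ∈ P.R) :
    wprod P l ∈ weyl P := by
  induction l with
  | nil => exact one_mem _
  | cons β m ih =>
    rw [wprod_cons]
    exact mul_mem (reflL_mem P (hl β (by simp)))
      (ih (fun γ hγ => hl γ (by simp [hγ])))

lemma wprod_reverse {l : List (Fin r → ℤ)} (hl : ∀ β ∈ l, β ∈ P.R) :
    wprod P l.reverse * wprod P l = 1 ∧ wprod P l * wprod P l.reverse = 1 := by
  induction l with
  | nil => simp [wprod]
  | cons β m ih =>
    have hβ : β ∈ P.R := hl β (by simp)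
    obtain ⟨ih1, ih2⟩ := ih (fun γ hγ => hl γ (by simp [hγ]))
    have hsing : wprod P [β] = reflL P β := by simp [wprod]
    constructor
    · simp only [List.reverse_cons, wprod_append, wprod_cons, wprod_nil, mul_one]
      calc wprod P m.reverse * reflL P β * (reflL P β * wprod P m)
          = wprod P m.reverse * (reflL P β * reflL P β * wprod P m) := by
            rw [mul_assoc, ← mul_assoc (reflL P β)]
        _ = wprod P m.reverse * wprod P m := by rw [reflL_invol P hβ, one_mul]
        _ = 1 := ih1
    · simp only [List.reverse_cons, wprod_append, wprod_cons, wprod_nil, mul_one]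
      calc reflL P β * wprod P m * (wprod P m.reverse * reflL P β)
          = reflL P β * (wprod P m * wprod P m.reverse) * reflL P β := by
            rw [mul_assoc, mul_assoc, mul_assoc]
        _ = reflL P β * reflL P β := by rw [ih2, mul_one]
        _ = 1 := reflL_invol P hβ

lemma simple_coeff_zero (a : (Fin r → ℤ) → ℤ)
    (h : ∑ γ ∈ P.simple, a γ • γ = 0) : ∀ γ ∈ P.simple, a γ = 0 := by
  have hli := linearIndependent_iff'.mp P.simple_indep Finset.univ
    (fun i => a i.val)
  have hsum : ∑ i : {x : Fin r → ℤ // x ∈ P.simple}, a i.val • i.val = 0 := by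
    rw [Finset.sum_coe_sort P.simple (fun γ => a γ • γ)]
    exact h
  intro γ hγ
  exact hli hsum ⟨γ, hγ⟩ (Finset.mem_univ _)

lemma simple_refl_pos {β} (hβ : β ∈ P.simple) {α} (hα : α ∈ P.pos) (hne : α ≠ β) :
    reflL P β α ∈ P.pos := by
  have hβR : β ∈ P.R := P.pos_subset (P.simple_subset hβ)
  have hαR : α ∈ P.R := P.pos_subset hα
  have hρR : reflL P β α ∈ P.R := by
    rw [reflL_apply]; exact P.root_perm β hβR α hαR
  rcases P.pos_total _ hρR with h | h
  · exact h
  · exfalso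
    obtain ⟨c, hc⟩ := P.simple_gen α hα
    obtain ⟨d, hd⟩ := P.simple_gen _ (h : -(reflL P β α) ∈ P.pos)
    set m := P.coroot β α with hm
    have key : ∑ γ ∈ P.simple, (((c γ : ℤ) + (d γ : ℤ)) - (if γ = β then m else 0)) • γ = 0 := by
      have e1 : ∑ γ ∈ P.simple, (((c γ : ℤ) + (d γ : ℤ)) - (if γ = β then m else 0)) • γ
          = (∑ γ ∈ P.simple, (c γ : ℤ) • γ) + (∑ γ ∈ P.simple, (d γ : ℤ) • γ)
            - (∑ γ ∈ P.simple, (if γ = β then m else 0) • γ) := by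
        rw [← Finset.sum_add_distrib, ← Finset.sum_sub_distrib]
        exact Finset.sum_congr rfl fun γ _ => by rw [sub_smul, add_smul]
      have e2 : (∑ γ ∈ P.simple, (c γ : ℤ) • γ) = α := by
        rw [hc]; exact Finset.sum_congr rfl fun γ _ => Nat.cast_smul_eq_nsmul ℤ _ _
      have e3 : (∑ γ ∈ P.simple, (d γ : ℤ) • γ) = -(reflL P β α) := by
        rw [hd]; exact Finset.sum_congr rfl fun γ _ => Nat.cast_smul_eq_nsmul ℤ _ _
      have e4 : (∑ γ ∈ P.simple, (if γ = β then m else 0) • γ) = m • β := by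
        simp only [ite_smul, zero_smul]
        rw [Finset.sum_ite_eq' P.simple β (fun γ => m • γ)]
        simp [hβ]
      rw [e1, e2, e3, e4, reflL_apply, ← hm]
      abel
    have hcoeff := simple_coeff_zero P _ key
    have hczero : ∀ γ ∈ P.simple, γ ≠ β → c γ = 0 := by
      intro γ hγ hγβ
      have := hcoeff γ hγ
      rw [if_neg hγβ] at this
      omega
    have hαeq : α = (c β : ℤ) • β := by
      rw [hc]
      rw [Finset.sum_eq_single β]
      · rw [Nat.cast_smul_eq_nsmul]
      · intro γ hγ hγβ
        rw [hczero γ hγ hγβ, zero_smul]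
      · intro hβ'; exact absurd hβ hβ'
    have hdvd : (c β : ℤ) ∣ 2 := by
      refine ⟨P.coroot α β, ?_⟩
      rw [← P.coroot_self α hαR]
      nth_rewrite 2 [hαeq]
      rw [map_smul, smul_eq_mul]
    have hle : (c β : ℤ) ≤ 2 := Int.le_of_dvd (by norm_num) hdvd
    have hcb : c β = 0 ∨ c β = 1 ∨ c β = 2 := by
      by_contra hcon
      push_neg at hcon
      obtain ⟨h0, h1, h2⟩ := hcon
      have h3 : (3:ℤ) ≤ (c β : ℤ) := by exact_mod_cast by omega
      omega
    rcases hcb with h0 | h1 | h2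
    · apply P.ne_zero α hαR
      rw [hαeq, h0]; simp
    · apply hne
      rw [hαeq, h1]; simp
    · apply P.reduced β hβR
      have : α = (2:ℤ) • β := by rw [hαeq, h2]; norm_num
      rwa [← this]

end RootLemmas3

section RootLemmas4
variable {r : ℕ} (P : RootSystemData r)

lemma deletion (l : List (Fin r → ℤ)) (hl : ∀ β ∈ l, β ∈ P.simple)
    {α} (hα : α ∈ P.pos) (hneg : wprod P l α ∉ P.pos) :
    ∃ l₁ β l₂, β ∈ P.simple ∧ l = l₁ ++ β :: l₂ ∧ wprod P l₂ α = β ∧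
      (∀ γ ∈ l₁, γ ∈ P.simple) ∧ (∀ γ ∈ l₂, γ ∈ P.simple) := by
  induction l with
  | nil =>
    exfalso; apply hneg
    have : wprod P [] α = α := rfl
    rwa [this]
  | cons β₀ m ih =>
    by_cases hm : wprod P m α ∈ P.pos
    · have happ : wprod P (β₀ :: m) α = reflL P β₀ (wprod P m α) := by
        rw [wprod_cons]; rfl
      have hβ₀ : β₀ ∈ P.simple := hl β₀ (by simp)
      have heq : wprod P m α = β₀ := by
        by_contra hne
        exact hneg (happ ▸ simple_refl_pos P hβ₀ hm hne)
      exact ⟨[], β₀, m, hβ₀, rfl, heq, by simp,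
        fun γ hγ => hl γ (by simp [hγ])⟩
    · obtain ⟨l₁, β, l₂, hβ, hsplit, hval, h1, h2⟩ :=
        ih (fun γ hγ => hl γ (by simp [hγ])) hm
      exact ⟨β₀ :: l₁, β, l₂, hβ, by rw [hsplit]; rfl, hval,
        by intro γ hγ; rcases List.mem_cons.mp hγ with h | h
           · exact h ▸ hl β₀ (by simp)
           · exact h1 γ h, h2⟩

lemma root_conj
    (hex : ∀ σ ∈ weyl P, ∃ l : List (Fin r → ℤ),
      (∀ β ∈ l, β ∈ P.simple) ∧ (l.map (reflL P)).prod = σ) :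
    ∀ α ∈ P.R, ∃ u ∈ weyl P, ∃ β ∈ P.simple, u β = α := by
  have hpos : ∀ α ∈ P.pos, ∃ u ∈ weyl P, ∃ β ∈ P.simple, u β = α := by
    intro α hα
    have hαR : α ∈ P.R := P.pos_subset hα
    obtain ⟨l, hl, hprod⟩ := hex (reflL P α) (reflL_mem P hαR)
    have hprod' : wprod P l = reflL P α := hprod
    have hneg : wprod P l α ∉ P.pos := by
      rw [hprod', reflL_self P hαR]
      exact P.pos_asymm α hα
    obtain ⟨l₁, β, l₂, hβ, _, hval, _, h2⟩ := deletion P l hl hα hneg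
    have hl₂R : ∀ γ ∈ l₂, γ ∈ P.R :=
      fun γ hγ => P.pos_subset (P.simple_subset (h2 γ hγ))
    obtain ⟨hi1, _⟩ := wprod_reverse P hl₂R
    refine ⟨wprod P l₂.reverse,
      wprod_mem P (fun γ hγ => hl₂R γ (List.mem_reverse.mp hγ)), β, hβ, ?_⟩
    rw [← hval]
    have : wprod P l₂.reverse (wprod P l₂ α) = (wprod P l₂.reverse * wprod P l₂) α := rfl
    rw [this, hi1]; rfl
  intro α hαR
  rcases P.pos_total α hαR with h | h
  · exact hpos α h
  · obtain ⟨u, hu, β, hβ, huβ⟩ := hpos (-α) h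
    have hβR : β ∈ P.R := P.pos_subset (P.simple_subset hβ)
    refine ⟨u * reflL P β, mul_mem hu (reflL_mem P hβR), β, hβ, ?_⟩
    have h1 : (u * reflL P β) β = u (reflL P β β) := rfl
    rw [h1, reflL_self P hβR, map_neg, huβ, neg_neg]

lemma exists_min_word
    (hex : ∀ σ ∈ weyl P, ∃ l : List (Fin r → ℤ),
      (∀ β ∈ l, β ∈ P.simple) ∧ (l.map (reflL P)).prod = σ)
    {σ} (hσ : σ ∈ weyl P) :
    ∃ l : List (Fin r → ℤ), (∀ β ∈ l, β ∈ P.simple) ∧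
      wprod P l = σ ∧ l.length = len P σ := by
  obtain ⟨l, hl, hprod⟩ := hex σ hσ
  have hne : {n | ∃ l : List (Fin r → ℤ), (∀ β ∈ l, β ∈ P.simple) ∧
      (l.map (reflL P)).prod = σ ∧ l.length = n}.Nonempty :=
    ⟨l.length, l, hl, hprod, rfl⟩
  obtain ⟨l', hl', hprod', hlen'⟩ := Nat.sInf_mem hne
  exact ⟨l', hl', hprod', hlen'⟩

lemma exists_reduced_head
    (hfin : (weyl P : Set (Module.End ℤ (Fin r → ℤ))).Finite)
    (hex : ∀ σ ∈ weyl P, ∃ l : List (Fin r → ℤ),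
      (∀ β ∈ l, β ∈ P.simple) ∧ (l.map (reflL P)).prod = σ)
    {w0} (hw0W : w0 ∈ weyl P)
    (hw0 : ∀ α ∈ P.pos, -(w0 α) ∈ P.pos) {β} (hβ : β ∈ P.simple) :
    ∃ m : List (Fin r → ℤ), (∀ γ ∈ β :: m, γ ∈ P.simple) ∧
      wprod P (β :: m) = w0 ∧ (β :: m).length = len P w0 := by
  obtain ⟨l, hl, hprod, hlen⟩ := exists_min_word P hex hw0W
  have hlR : ∀ γ ∈ l, γ ∈ P.R :=
    fun γ hγ => P.pos_subset (P.simple_subset (hl γ hγ))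
  have hrevsimple : ∀ γ ∈ l.reverse, γ ∈ P.simple :=
    fun γ hγ => hl γ (List.mem_reverse.mp hγ)
  obtain ⟨hinv1, hinv2⟩ := wprod_reverse P hlR
  have hβpos : β ∈ P.pos := P.simple_subset hβ
  have hβR : β ∈ P.R := P.pos_subset hβpos
  have hneg : wprod P l.reverse β ∉ P.pos := by
    intro hq
    have h2 := hw0 _ hq
    have h3 : w0 (wprod P l.reverse β) = β := by
      have e : w0 (wprod P l.reverse β) = (wprod P l * wprod P l.reverse) β := by
        rw [hprod]; rfl
      rw [e, hinv2]; rfl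
    rw [h3] at h2
    exact P.pos_asymm β hβpos h2
  obtain ⟨l₁, β', l₂, hβ', hsplit, hval, h1, h2⟩ :=
    deletion P l.reverse hrevsimple hβpos hneg
  have hβ'R : β' ∈ P.R := P.pos_subset (P.simple_subset hβ')
  have hl₂R : ∀ γ ∈ l₂, γ ∈ P.R :=
    fun γ hγ => P.pos_subset (P.simple_subset (h2 γ hγ))
  have hconj := reflL_conj P hfin (wprod_mem P hl₂R) hβR
  rw [hval] at hconj
  have hdel : wprod P l.reverse * reflL P β = wprod P (l₁ ++ l₂) := by
    rw [hsplit, wprod_append, wprod_cons, wprod_append]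
    calc wprod P l₁ * (reflL P β' * wprod P l₂) * reflL P β
        = wprod P l₁ * (reflL P β' * (wprod P l₂ * reflL P β)) := by
          rw [mul_assoc, mul_assoc]
      _ = wprod P l₁ * (reflL P β' * (reflL P β' * wprod P l₂)) := by rw [hconj]
      _ = wprod P l₁ * ((reflL P β' * reflL P β') * wprod P l₂) := by rw [mul_assoc]
      _ = wprod P l₁ * wprod P l₂ := by rw [reflL_invol P hβ'R, one_mul]
  have h12R : ∀ γ ∈ l₁ ++ l₂, γ ∈ P.R := by
    intro γ hγ
    rcases List.mem_append.mp hγ with h | h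
    · exact P.pos_subset (P.simple_subset (h1 γ h))
    · exact hl₂R γ h
  obtain ⟨hi1, hi2⟩ := wprod_reverse P h12R
  have hw0q : w0 * wprod P (l₁ ++ l₂) = reflL P β := by
    rw [← hdel, ← mul_assoc, ← hprod, hinv2, one_mul]
  refine ⟨(l₁ ++ l₂).reverse, ?_, ?_, ?_⟩
  · intro γ hγ
    rcases List.mem_cons.mp hγ with h | h
    · exact h ▸ hβ
    · have := List.mem_reverse.mp h
      rcases List.mem_append.mp this with h' | h'
      · exact h1 γ h'
      · exact h2 γ h'
  · rw [wprod_cons]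
    calc reflL P β * wprod P (l₁ ++ l₂).reverse
        = (w0 * wprod P (l₁ ++ l₂)) * wprod P (l₁ ++ l₂).reverse := by rw [hw0q]
      _ = w0 * (wprod P (l₁ ++ l₂) * wprod P (l₁ ++ l₂).reverse) := by rw [mul_assoc]
      _ = w0 := by rw [hi2, mul_one]
  · have hlenl : l.length = l₁.length + 1 + l₂.length := by
      have h' : l.reverse.length = (l₁ ++ β' :: l₂).length := by rw [hsplit]
      simp at h'
      omega
    simp only [List.length_cons, List.length_reverse, List.length_append]
    rw [← hlen]
    omega

end RootLemmas4

section PolyLemmas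
variable {r : ℕ}

noncomputable def linL : (Fin r → ℤ) →ₗ[ℤ] MvPolynomial (Fin r) ℤ where
  toFun := lin
  map_add' a b := by
    simp only [lin, Pi.add_apply, map_add, add_mul, Finset.sum_add_distrib]
  map_smul' c a := by
    simp only [lin, Pi.smul_apply, smul_eq_mul, map_mul, RingHom.id_apply,
      Finset.smul_sum, MvPolynomial.smul_eq_C_mul, mul_assoc]

lemma lin_single (i : Fin r) : lin (Pi.single i 1 : Fin r → ℤ) = X i := by
  rw [lin, Finset.sum_eq_single i]
  · simp
  · intro j _ hji
    rw [Pi.single_apply, if_neg hji]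
    simp
  · intro h
    exact absurd (Finset.mem_univ i) h

lemma act_lin (σ : Module.End ℤ (Fin r → ℤ)) (v : Fin r → ℤ) :
    act σ (lin v) = lin (σ v) := by
  have hv : v = ∑ i, v i • Pi.single i 1 := by
    have h := (Pi.basisFun ℤ (Fin r)).sum_repr v
    simp only [Pi.basisFun_repr, Pi.basisFun_apply] at h
    exact h.symm
  have h1 : act σ (lin v) = ∑ i, C (v i) * lin (σ (Pi.single i 1)) := by
    rw [lin, map_sum]
    apply Finset.sum_congr rfl
    intro i _
    rw [map_mul]
    congr 1
    · exact aeval_C _ _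
    · exact aeval_X _ _
  rw [h1]
  conv_rhs => rw [hv, map_sum]
  have h2 : lin (∑ i, σ (v i • Pi.single i 1)) = ∑ i, C (v i) * lin (σ (Pi.single i 1)) := by
    show linL (∑ i, σ (v i • Pi.single i 1)) = _
    rw [map_sum]
    apply Finset.sum_congr rfl
    intro i _
    rw [map_smul, map_smul]
    show v i • lin (σ (Pi.single i 1)) = _
    rw [MvPolynomial.smul_eq_C_mul]
  rw [← h2]

lemma act_mul (σ τ : Module.End ℤ (Fin r → ℤ)) :
    act (σ * τ) = (act σ).comp (act τ) := by
  apply MvPolynomial.algHom_ext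
  intro i
  rw [AlgHom.comp_apply]
  rw [show act (σ * τ) (X i) = lin ((σ * τ) (Pi.single i 1)) from aeval_X _ _]
  rw [show act τ (X i) = lin (τ (Pi.single i 1)) from aeval_X _ _]
  rw [act_lin]
  rfl

lemma act_one : (act (1 : Module.End ℤ (Fin r → ℤ))) = AlgHom.id ℤ _ := by
  apply MvPolynomial.algHom_ext
  intro i
  rw [show act 1 (X i) = lin ((1 : Module.End ℤ (Fin r → ℤ)) (Pi.single i 1)) from aeval_X _ _]
  simp [lin_single]

lemma lin_injective {v : Fin r → ℤ} (h : lin v = 0) : v = 0 := by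
  funext i
  have hc : coeff (Finsupp.single i 1) (lin v) = v i := by
    rw [lin, MvPolynomial.coeff_sum]
    rw [Finset.sum_eq_single i]
    · rw [coeff_C_mul, MvPolynomial.coeff_X, if_pos rfl, mul_one]
    · intro j _ hji
      rw [coeff_C_mul, MvPolynomial.coeff_X', if_neg, mul_zero]
      intro hcon
      exact hji ((Finsupp.single_left_inj one_ne_zero).mp hcon)
    · intro h
      exact absurd (Finset.mem_univ i) h
  rw [h] at hc
  simpa using hc.symm

variable (k : Type) [CommRing k]

noncomputable def linkL : (Fin r → ℤ) →ₗ[ℤ] MvPolynomial (Fin r) k where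
  toFun := link k
  map_add' a b := by
    simp only [link, Pi.add_apply, Int.cast_add, map_add, add_mul,
      Finset.sum_add_distrib]
  map_smul' c a := by
    simp only [RingHom.id_apply]
    rw [show c • link k a = ((c : k)) • link k a from
      (Int.cast_smul_eq_zsmul k c (link k a)).symm, MvPolynomial.smul_eq_C_mul]
    simp only [link, Pi.smul_apply, smul_eq_mul, Int.cast_mul, map_mul,
      Finset.mul_sum, mul_assoc]

lemma link_single (i : Fin r) : link k (Pi.single i 1 : Fin r → ℤ) = X i := by
  rw [link, Finset.sum_eq_single i]
  · simp
  · intro j _ hji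
    rw [Pi.single_apply, if_neg hji]
    simp
  · intro h
    exact absurd (Finset.mem_univ i) h

lemma actk_link (σ : Module.End ℤ (Fin r → ℤ)) (v : Fin r → ℤ) :
    actk k σ (link k v) = link k (σ v) := by
  have hv : v = ∑ i, v i • Pi.single i 1 := by
    have h := (Pi.basisFun ℤ (Fin r)).sum_repr v
    simp only [Pi.basisFun_repr, Pi.basisFun_apply] at h
    exact h.symm
  have h1 : actk k σ (link k v) = ∑ i, C ((v i : ℤ) : k) * link k (σ (Pi.single i 1)) := by
    rw [link, map_sum]
    apply Finset.sum_congr rfl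
    intro i _
    rw [map_mul]
    congr 1
    · exact aeval_C _ _
    · exact aeval_X _ _
  rw [h1]
  conv_rhs => rw [hv, map_sum]
  have h2 : link k (∑ i, σ (v i • Pi.single i 1))
      = ∑ i, C ((v i : ℤ) : k) * link k (σ (Pi.single i 1)) := by
    show linkL k (∑ i, σ (v i • Pi.single i 1)) = _
    rw [map_sum]
    apply Finset.sum_congr rfl
    intro i _
    rw [map_smul, map_smul]
    show v i • link k (σ (Pi.single i 1)) = _
    rw [show v i • link k (σ (Pi.single i 1))
        = ((v i : k)) • link k (σ (Pi.single i 1)) from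
      (Int.cast_smul_eq_zsmul k _ _).symm, MvPolynomial.smul_eq_C_mul]
  rw [← h2]

lemma actk_mul (σ τ : Module.End ℤ (Fin r → ℤ)) :
    actk k (σ * τ) = (actk k σ).comp (actk k τ) := by
  apply MvPolynomial.algHom_ext
  intro i
  rw [AlgHom.comp_apply]
  rw [show actk k (σ * τ) (X i) = link k ((σ * τ) (Pi.single i 1)) from aeval_X _ _]
  rw [show actk k τ (X i) = link k (τ (Pi.single i 1)) from aeval_X _ _]
  rw [actk_link]
  rfl

lemma actk_one : (actk k (1 : Module.End ℤ (Fin r → ℤ))) = AlgHom.id k _ := by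
  apply MvPolynomial.algHom_ext
  intro i
  rw [show actk k 1 (X i) = link k ((1 : Module.End ℤ (Fin r → ℤ)) (Pi.single i 1)) from
    aeval_X _ _]
  simp [link_single]

lemma iota_lin (v : Fin r → ℤ) : ιk k (lin v) = link k v := by
  rw [lin, link, map_sum]
  apply Finset.sum_congr rfl
  intro i _
  rw [map_mul, ιk, MvPolynomial.map_C, MvPolynomial.map_X]
  rfl

lemma iota_act (σ : Module.End ℤ (Fin r → ℤ)) (u : MvPolynomial (Fin r) ℤ) :
    ιk k (act σ u) = actk k σ (ιk k u) := by
  have : (ιk k).comp ((act σ : MvPolynomial (Fin r) ℤ →ₐ[ℤ] MvPolynomial (Fin r) ℤ) :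
      MvPolynomial (Fin r) ℤ →+* MvPolynomial (Fin r) ℤ)
      = ((actk k σ : MvPolynomial (Fin r) k →ₐ[k] MvPolynomial (Fin r) k) :
        MvPolynomial (Fin r) k →+* MvPolynomial (Fin r) k).comp (ιk k) := by
    apply MvPolynomial.ringHom_ext
    · intro a
      simp only [RingHom.comp_apply, RingHom.coe_coe]
      rw [show (act σ) (C a) = C a from by
        rw [show (C a : MvPolynomial (Fin r) ℤ) = algebraMap ℤ _ a from rfl]; exact aeval_C _ a]
      rw [ιk, MvPolynomial.map_C]
      have h2 : (actk k σ) (C ((Int.castRingHom k) a))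
          = algebraMap k (MvPolynomial (Fin r) k) ((Int.castRingHom k) a) := aeval_C _ _
      rw [h2]
      rfl
    · intro i
      simp only [RingHom.comp_apply, RingHom.coe_coe]
      rw [show (act σ) (X i) = lin (σ (Pi.single i 1)) from aeval_X _ _]
      have h1 : (MvPolynomial.map (Int.castRingHom k)) (lin (σ (Pi.single i 1)))
          = link k (σ (Pi.single i 1)) := iota_lin k _
      rw [ιk, MvPolynomial.map_X, h1]
      exact (aeval_X (fun i => link k (σ (Pi.single i 1))) i).symm
  exact RingHom.congr_fun this u

lemma endk_ext {F G : Module.End k (MvPolynomial (Fin r) k)}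
    (h : ∀ x : MvPolynomial (Fin r) ℤ, F (ιk k x) = G (ιk k x)) : F = G := by
  apply LinearMap.ext
  intro u
  conv_lhs => rw [MvPolynomial.as_sum u]
  conv_rhs => rw [MvPolynomial.as_sum u]
  rw [map_sum, map_sum]
  apply Finset.sum_congr rfl
  intro a _
  have hm : (MvPolynomial.monomial a) (coeff a u)
      = (coeff a u) • ιk k ((MvPolynomial.monomial a) (1:ℤ)) := by
    rw [ιk, MvPolynomial.map_monomial, MvPolynomial.smul_monomial]
    norm_num
  rw [hm, map_smul, map_smul, h]

end PolyLemmas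

section DLemmas
variable {r : ℕ} (P : RootSystemData r)

lemma lin_root_ne_zero {α} (hα : α ∈ P.R) : lin α ≠ 0 :=
  fun h => P.ne_zero α hα (lin_injective h)

lemma cancel_lin {α} (hα : α ∈ P.R) {a b : MvPolynomial (Fin r) ℤ}
    (h : lin α * a = lin α * b) : a = b :=
  mul_left_cancel₀ (lin_root_ne_zero P hα) h

lemma act_invol {α} (hα : α ∈ P.R) (u) :
    act (reflL P α) (act (reflL P α) u) = u := by
  have h : act (reflL P α * reflL P α) u = u := by
    rw [reflL_invol P hα, act_one]; rfl
  rw [act_mul] at h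
  exact h

lemma act_lin_neg {α} (hα : α ∈ P.R) : act (reflL P α) (lin α) = -lin α := by
  rw [act_lin, reflL_self P hα]
  exact map_neg linL α

variable (D : (Fin r → ℤ) → MvPolynomial (Fin r) ℤ → MvPolynomial (Fin r) ℤ)
  (hD : ∀ γ ∈ P.R, ∀ u, lin γ * D γ u = u - act (reflL P γ) u)

include hD

lemma act_D {α} (hα : α ∈ P.R) (u) : act (reflL P α) (D α u) = D α u := by
  apply cancel_lin P hα
  have h0 := hD α hα u
  have h1 : lin α * act (reflL P α) (D α u)
      = - act (reflL P α) (lin α * D α u) := by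
    rw [map_mul, act_lin_neg P hα]; ring
  rw [h1, h0, map_sub, act_invol P hα]
  ring

lemma D_D {α} (hα : α ∈ P.R) (u) : D α (D α u) = 0 := by
  apply cancel_lin P hα (b := 0)
  rw [hD α hα, act_D P D hD hα, mul_zero, sub_self]

lemma D_leibniz {α} (hα : α ∈ P.R) (f g) :
    D α (f * g) = D α f * g + act (reflL P α) f * D α g := by
  apply cancel_lin P hα
  rw [hD α hα, mul_add,
    show lin α * (D α f * g) = (lin α * D α f) * g from by ring, hD α hα,
    show lin α * (act (reflL P α) f * D α g)
      = act (reflL P α) f * (lin α * D α g) from by ring, hD α hα,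
    map_mul]
  ring

lemma D_conj {u u' : Module.End ℤ (Fin r → ℤ)} (hu : u ∈ weyl P)
    (huu' : u * u' = 1) (hu'u : u' * u = 1)
    (hfin : (weyl P : Set (Module.End ℤ (Fin r → ℤ))).Finite)
    {α} (hα : α ∈ P.R) (x) :
    D (u α) x = act u (D α (act u' x)) := by
  have huα : u α ∈ P.R := weyl_root P hu α hα
  apply cancel_lin P huα
  rw [hD (u α) huα]
  have e1 : lin (u α) = act u (lin α) := (act_lin u α).symm
  rw [e1, ← map_mul, hD α hα (act u' x), map_sub]
  have e2 : ∀ y, act u (act u' y) = y := fun y => by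
    have h : act (u * u') y = y := by rw [huu', act_one]; rfl
    rw [act_mul] at h
    exact h
  have e3 : act u (act (reflL P α) (act u' x)) = act (reflL P (u α)) x := by
    have hc : u * (reflL P α * u') = reflL P (u α) := by
      rw [← mul_assoc, reflL_conj P hfin hu hα, mul_assoc, huu', mul_one]
    have h4 : act (u * (reflL P α * u')) x
        = act u (act (reflL P α) (act u' x)) := by
      rw [act_mul, act_mul]
      rfl
    rw [← h4, hc]
  rw [e2, e3]

end DLemmas

/-- With `ψ(u) = ∂_{w₀}(𝔖_{w₀}u)` and `J` the left ideal of
`D_k` generated by `ψ` and all elements `1 - w` (`w ∈ W`), every left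
`D_k`-module `M` decomposes as `M^W = M^{I(D_k)} ⊕ M^J` (where `M^J` is the
submodule annihilated by `J`); in particular `M^W = M^{I(D_k)}` if and only if
`M^J = 0`. -/
theorem statement14 {r : ℕ} (P : RootSystemData r) (k : Type) [CommRing k]
    (hsimp : weyl P = Submonoid.closure ((fun β => reflL P β) '' ↑P.simple))
    (hex : ∀ σ ∈ weyl P, ∃ l : List (Fin r → ℤ),
      (∀ β ∈ l, β ∈ P.simple) ∧ (l.map (reflL P)).prod = σ)
    (W : Finset (Module.End ℤ (Fin r → ℤ)))
    (hW : (W : Set (Module.End ℤ (Fin r → ℤ))) = (weyl P : Set (Module.End ℤ (Fin r → ℤ))))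
    (D : (Fin r → ℤ) → MvPolynomial (Fin r) ℤ → MvPolynomial (Fin r) ℤ)
    (hD : ∀ γ ∈ P.R, ∀ u, lin γ * D γ u = u - act (reflL P γ) u)
    (Dk : (Fin r → ℤ) → Module.End k (MvPolynomial (Fin r) k))
    (hcompat : ∀ γ ∈ P.R, ∀ u : MvPolynomial (Fin r) ℤ,
      Dk γ (ιk k u) = ιk k (D γ u))
    (Dwk : Module.End ℤ (Fin r → ℤ) → Module.End k (MvPolynomial (Fin r) k))
    (hDwk : ∀ (σ : Module.End ℤ (Fin r → ℤ)) (l : List (Fin r → ℤ)),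
      (∀ β ∈ l, β ∈ P.simple) → (l.map (reflL P)).prod = σ → l.length = len P σ →
      Dwk σ = (l.map Dk).prod)
    (w0 : Module.End ℤ (Fin r → ℤ)) (hw0W : w0 ∈ W)
    (hw0 : ∀ α ∈ P.pos, -(w0 α) ∈ P.pos)
    (Stop : MvPolynomial (Fin r) k)
    (h1 : Dwk w0 Stop = 1)
    (A : Subalgebra k (Module.End k (MvPolynomial (Fin r) k)))
    (hA : A = Algebra.adjoin k
      ({T' | ∃ u : MvPolynomial (Fin r) k, T' = LinearMap.mulLeft k u} ∪
        {T' | ∃ α ∈ P.R, T' = Dk α}))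
    (ψA : A)
    (hψA : ∀ u : MvPolynomial (Fin r) k,
      (ψA : Module.End k (MvPolynomial (Fin r) k)) u = Dwk w0 (Stop * u))
    (wA : (w : Module.End ℤ (Fin r → ℤ)) → w ∈ W → A)
    (hwA : ∀ (w : Module.End ℤ (Fin r → ℤ)) (hw : w ∈ W),
      ((wA w hw : A) : Module.End k (MvPolynomial (Fin r) k)) = (actk k w).toLinearMap) :
    ∀ (M : Type) [AddCommGroup M] [Module A M],
      (∀ m : M,
        (∀ (w : Module.End ℤ (Fin r → ℤ)) (hw : w ∈ W), wA w hw • m = m) ↔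
          ∃ m1 m2 : M,
            (∀ T : A, (T : Module.End k (MvPolynomial (Fin r) k)) 1 = 0 → T • m1 = 0) ∧
            (∀ T ∈ Submodule.span A {x : A | x = ψA ∨
        ∃ (w : Module.End ℤ (Fin r → ℤ)) (hw : w ∈ W), x = 1 - wA w hw}, T • m2 = 0) ∧ m = m1 + m2) ∧
      (∀ m : M,
        (∀ T : A, (T : Module.End k (MvPolynomial (Fin r) k)) 1 = 0 → T • m = 0) →
        (∀ T ∈ Submodule.span A {x : A | x = ψA ∨
        ∃ (w : Module.End ℤ (Fin r → ℤ)) (hw : w ∈ W), x = 1 - wA w hw}, T • m = 0) → m = 0) ∧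
      ((∀ m : M, (∀ (w : Module.End ℤ (Fin r → ℤ)) (hw : w ∈ W), wA w hw • m = m) →
          (∀ T : A, (T : Module.End k (MvPolynomial (Fin r) k)) 1 = 0 → T • m = 0)) ↔
        (∀ m : M, (∀ T ∈ Submodule.span A {x : A | x = ψA ∨
        ∃ (w : Module.End ℤ (Fin r → ℤ)) (hw : w ∈ W), x = 1 - wA w hw}, T • m = 0) → m = 0)) := by
  intro M instG instM
  -- membership translation and finiteness
  have hWmem : ∀ {σ : Module.End ℤ (Fin r → ℤ)}, σ ∈ W ↔ σ ∈ weyl P := by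
    intro σ
    constructor
    · intro h
      have h2 : σ ∈ (W : Set (Module.End ℤ (Fin r → ℤ))) := h
      rw [hW] at h2
      exact h2
    · intro h
      have h2 : σ ∈ (weyl P : Set (Module.End ℤ (Fin r → ℤ))) := h
      rw [← hW] at h2
      exact h2
  have hfin : (weyl P : Set (Module.End ℤ (Fin r → ℤ))).Finite := by
    rw [← hW]
    exact W.finite_toSet
  have hw0w : w0 ∈ weyl P := hWmem.mp hw0W
  -- decomposition of Dwk w0 with a chosen simple first letter
  have hhead : ∀ β ∈ P.simple, ∃ m : List (Fin r → ℤ),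
      (∀ γ ∈ m, γ ∈ P.simple) ∧ Dwk w0 = Dk β * (m.map Dk).prod := by
    intro β hβ
    obtain ⟨m, hm, hprod, hlen⟩ := exists_reduced_head P hfin hex hw0w hw0 hβ
    have hd := hDwk w0 (β :: m) hm hprod hlen
    refine ⟨m, fun γ hγ => hm γ (by simp [hγ]), ?_⟩
    rw [hd, List.map_cons, List.prod_cons]
  -- basic k-level operator identities
  have hDkinv : ∀ α ∈ P.R,
      (actk k (reflL P α)).toLinearMap * Dk α = Dk α := by
    intro α hα
    apply endk_ext k
    intro x
    have e : ((actk k (reflL P α)).toLinearMap * Dk α) (ιk k x)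
        = actk k (reflL P α) (Dk α (ιk k x)) := rfl
    rw [e, hcompat α hα, ← iota_act, act_D P D hD hα]
  have hDkDk : ∀ α ∈ P.R, Dk α * Dk α = 0 := by
    intro α hα
    apply endk_ext k
    intro x
    have e : (Dk α * Dk α) (ιk k x) = Dk α (Dk α (ιk k x)) := rfl
    rw [e, hcompat α hα, hcompat α hα, D_D P D hD hα]
    simp
  -- W-invariance of the image of Dwk w0
  have hF1 : ∀ σ ∈ weyl P, ∀ y, actk k σ (Dwk w0 y) = Dwk w0 y := by
    intro σ hσ
    rw [hsimp] at hσ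
    induction hσ using Submonoid.closure_induction with
    | mem x hx =>
      obtain ⟨β, hβs, rfl⟩ := hx
      have hβ : β ∈ P.simple := hβs
      have hβR : β ∈ P.R := P.pos_subset (P.simple_subset hβ)
      intro y
      obtain ⟨m, _, hdecomp⟩ := hhead β hβ
      rw [hdecomp]
      have e : (Dk β * (m.map Dk).prod) y = Dk β ((m.map Dk).prod y) := rfl
      rw [e]
      exact LinearMap.congr_fun (hDkinv β hβR) ((m.map Dk).prod y)
    | one =>
      intro y
      rw [actk_one]
      rfl
    | mul x y hx hy ihx ihy =>
      intro z
      have e : actk k (x * y) (Dwk w0 z) = actk k x (actk k y (Dwk w0 z)) := by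
        rw [actk_mul]
        rfl
      rw [e, ihy, ihx]
  -- Dk kills the image of Dwk w0
  have hF2 : ∀ α ∈ P.R, ∀ y, Dk α (Dwk w0 y) = 0 := by
    intro α hα y
    obtain ⟨u, hu, β, hβ, huβ⟩ := root_conj P hex α hα
    obtain ⟨u', hu', huu', hu'u⟩ := weyl_inv P hu
    have hβR : β ∈ P.R := P.pos_subset (P.simple_subset hβ)
    have hconjk : Dk α
        = (actk k u).toLinearMap * (Dk β * (actk k u').toLinearMap) := by
      apply endk_ext k
      intro x
      have e : ((actk k u).toLinearMap * (Dk β * (actk k u').toLinearMap)) (ιk k x)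
          = actk k u (Dk β (actk k u' (ιk k x))) := rfl
      rw [e, hcompat α hα, ← iota_act, hcompat β hβR, ← iota_act,
        ← D_conj P D hD hu huu' hu'u hfin hβR x, huβ]
    have e2 : Dk α (Dwk w0 y)
        = actk k u (Dk β (actk k u' (Dwk w0 y))) := by
      rw [hconjk]
      rfl
    rw [e2, hF1 u' hu' y]
    obtain ⟨m, _, hdecomp⟩ := hhead β hβ
    rw [hdecomp]
    have e3 : Dk β ((Dk β * (m.map Dk).prod) y)
        = (Dk β * Dk β) ((m.map Dk).prod y) := rfl
    rw [e3, hDkDk β hβR]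
    simp
  -- Leibniz rule over k
  have hLeib : ∀ α ∈ P.R, ∀ f g : MvPolynomial (Fin r) k,
      Dk α (f * g) = Dk α f * g + actk k (reflL P α) f * Dk α g := by
    intro α hα
    have hstep1 : ∀ g0 : MvPolynomial (Fin r) ℤ, ∀ f : MvPolynomial (Fin r) k,
        Dk α (f * ιk k g0) = Dk α f * ιk k g0
          + actk k (reflL P α) f * Dk α (ιk k g0) := by
      intro g0
      have hEnd : (Dk α) ∘ₗ (LinearMap.mulRight k (ιk k g0))
          = (LinearMap.mulRight k (ιk k g0)) ∘ₗ (Dk α)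
            + (LinearMap.mulRight k (Dk α (ιk k g0))) ∘ₗ
              (actk k (reflL P α)).toLinearMap := by
        apply endk_ext k
        intro x
        simp only [LinearMap.comp_apply, LinearMap.add_apply,
          LinearMap.mulRight_apply, AlgHom.toLinearMap_apply]
        rw [← map_mul, hcompat α hα, hcompat α hα, ← iota_act, hcompat α hα,
          ← map_mul, ← map_mul, ← map_add, D_leibniz P D hD hα]
      intro f
      have := LinearMap.congr_fun hEnd f
      simpa only [LinearMap.comp_apply, LinearMap.add_apply,
        LinearMap.mulRight_apply, AlgHom.toLinearMap_apply] using this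
    intro f g
    have hEnd2 : (Dk α) ∘ₗ (LinearMap.mulLeft k f)
        = (LinearMap.mulLeft k (Dk α f))
          + (LinearMap.mulLeft k (actk k (reflL P α) f)) ∘ₗ (Dk α) := by
      apply endk_ext k
      intro g0
      simp only [LinearMap.comp_apply, LinearMap.add_apply,
        LinearMap.mulLeft_apply]
      exact hstep1 g0 f
    have := LinearMap.congr_fun hEnd2 g
    simpa only [LinearMap.comp_apply, LinearMap.add_apply,
      LinearMap.mulLeft_apply] using this
  -- property Q for all elements of A
  have hQ : ∀ T : Module.End k (MvPolynomial (Fin r) k), T ∈ A →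
      ∀ (f : MvPolynomial (Fin r) k) (y : MvPolynomial (Fin r) k),
        T (f * Dwk w0 y) = T f * Dwk w0 y := by
    intro T hT
    rw [hA] at hT
    induction hT using Algebra.adjoin_induction with
    | mem x hx =>
      rcases hx with hx | hx
      · obtain ⟨u, rfl⟩ := hx
        intro f y
        simp only [LinearMap.mulLeft_apply]
        rw [mul_assoc]
      · obtain ⟨α, hα, rfl⟩ := hx
        intro f y
        rw [hLeib α hα, hF2 α hα y, mul_zero, add_zero]
    | algebraMap c =>
      intro f y
      rw [Module.algebraMap_end_apply, Module.algebraMap_end_apply, smul_mul_assoc]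
    | add x y hx hy ihx ihy =>
      intro f z
      rw [LinearMap.add_apply, LinearMap.add_apply, ihx, ihy, add_mul]
    | mul x y hx hy ihx ihy =>
      intro f z
      have e : (x * y) (f * Dwk w0 z) = x (y (f * Dwk w0 z)) := rfl
      have e2 : (x * y) f = x (y f) := rfl
      rw [e, e2, ihy, ihx]
  -- ψ facts
  have hψ1 : (ψA : Module.End k (MvPolynomial (Fin r) k)) 1 = 1 := by
    rw [hψA, mul_one, h1]
  have hTψ : ∀ T : A, (T : Module.End k (MvPolynomial (Fin r) k)) 1 = 0 →
      T * ψA = 0 := by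
    intro T hT
    apply Subtype.ext
    show ((T * ψA : A) : Module.End k (MvPolynomial (Fin r) k)) = 0
    rw [MulMemClass.coe_mul]
    apply LinearMap.ext
    intro u
    have e : ((T : Module.End k (MvPolynomial (Fin r) k))
        * (ψA : Module.End k (MvPolynomial (Fin r) k))) u
        = (T : Module.End k (MvPolynomial (Fin r) k))
          ((ψA : Module.End k (MvPolynomial (Fin r) k)) u) := rfl
    rw [e, hψA u, show Dwk w0 (Stop * u) = 1 * Dwk w0 (Stop * u) from (one_mul _).symm,
      hQ _ T.2 1 (Stop * u), hT, zero_mul]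
    rfl
  have hψψ : ψA * ψA = ψA := by
    apply Subtype.ext
    rw [MulMemClass.coe_mul]
    apply LinearMap.ext
    intro u
    have e : ((ψA : Module.End k (MvPolynomial (Fin r) k))
        * (ψA : Module.End k (MvPolynomial (Fin r) k))) u
        = (ψA : Module.End k (MvPolynomial (Fin r) k))
          ((ψA : Module.End k (MvPolynomial (Fin r) k)) u) := rfl
    rw [e, hψA u, show Dwk w0 (Stop * u) = 1 * Dwk w0 (Stop * u) from (one_mul _).symm,
      hQ _ ψA.2 1 (Stop * u), hψ1]
  have hwψ : ∀ (w : Module.End ℤ (Fin r → ℤ)) (hw : w ∈ W),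
      (1 - wA w hw) * ψA = 0 := by
    intro w hw
    apply Subtype.ext
    rw [MulMemClass.coe_mul]
    apply LinearMap.ext
    intro u
    have e : (((1 - wA w hw : A) : Module.End k (MvPolynomial (Fin r) k))
        * (ψA : Module.End k (MvPolynomial (Fin r) k))) u
        = ((1 - wA w hw : A) : Module.End k (MvPolynomial (Fin r) k))
          ((ψA : Module.End k (MvPolynomial (Fin r) k)) u) := rfl
    rw [e]
    have hcoe : ((1 - wA w hw : A) : Module.End k (MvPolynomial (Fin r) k))
        = 1 - (actk k w).toLinearMap := by
      rw [AddSubgroupClass.coe_sub, OneMemClass.coe_one, hwA]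
    rw [hcoe, hψA u]
    have e2 : (1 - (actk k w).toLinearMap) (Dwk w0 (Stop * u))
        = Dwk w0 (Stop * u) - actk k w (Dwk w0 (Stop * u)) := rfl
    rw [e2, hF1 w (hWmem.mp hw), sub_self]
    rfl
  -- the key decomposition (part 1)
  set Jset : Set A := {x : A | x = ψA ∨
    ∃ (w : Module.End ℤ (Fin r → ℤ)) (hw : w ∈ W), x = 1 - wA w hw} with hJset
  have key1 : ∀ m : M,
      (∀ (w : Module.End ℤ (Fin r → ℤ)) (hw : w ∈ W), wA w hw • m = m) ↔
        ∃ m1 m2 : M,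
          (∀ T : A, (T : Module.End k (MvPolynomial (Fin r) k)) 1 = 0 → T • m1 = 0) ∧
          (∀ T ∈ Submodule.span A Jset, T • m2 = 0) ∧ m = m1 + m2 := by
    intro m
    constructor
    · intro hm
      refine ⟨ψA • m, m - ψA • m, ?_, ?_, by abel⟩
      · intro T hT
        rw [← mul_smul, hTψ T hT, zero_smul]
      · intro T hT
        induction hT using Submodule.span_induction with
        | mem x hx =>
          rcases hx with hx | ⟨w, hw, hx⟩
          · subst hx
            rw [smul_sub, ← mul_smul, hψψ, sub_self]
          · subst hx
            rw [smul_sub, ← mul_smul, hwψ w hw, zero_smul, sub_zero]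
            have h4 := sub_smul (1 : A) (wA w hw) m
            rw [one_smul, hm w hw, sub_self] at h4
            exact h4
        | zero => rw [zero_smul]
        | add x y hx hy ihx ihy => rw [add_smul, ihx, ihy, add_zero]
        | smul a x hx ih =>
          rw [smul_eq_mul, mul_smul, ih, smul_zero]
    · rintro ⟨m1, m2, hm1, hm2, heq⟩ w hw
      have h1' : wA w hw • m1 = m1 := by
        have hz : (wA w hw - 1) • m1 = 0 := by
          apply hm1
          rw [AddSubgroupClass.coe_sub, OneMemClass.coe_one, hwA]
          have h3 : (actk k w).toLinearMap (1 : MvPolynomial (Fin r) k) = 1 :=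
            map_one (actk k w)
          rw [LinearMap.sub_apply, h3, Module.End.one_apply, sub_self]
        have h4 := sub_smul (wA w hw) 1 m1
        rw [hz, one_smul] at h4
        exact (sub_eq_zero.mp h4.symm)
      have h2' : wA w hw • m2 = m2 := by
        have hz : (1 - wA w hw) • m2 = 0 :=
          hm2 _ (Submodule.subset_span (Or.inr ⟨w, hw, rfl⟩))
        have h4 := sub_smul (1 : A) (wA w hw) m2
        rw [hz, one_smul] at h4
        exact (sub_eq_zero.mp h4.symm).symm
      rw [heq, smul_add, h1', h2']
  have key2 : ∀ m : M,
      (∀ T : A, (T : Module.End k (MvPolynomial (Fin r) k)) 1 = 0 → T • m = 0) →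
      (∀ T ∈ Submodule.span A Jset, T • m = 0) → m = 0 := by
    intro m hI hJ
    have hψm : ψA • m = 0 := hJ ψA (Submodule.subset_span (Or.inl rfl))
    have hψ1m : (ψA - 1) • m = 0 := by
      apply hI
      rw [AddSubgroupClass.coe_sub, OneMemClass.coe_one, LinearMap.sub_apply,
        hψ1, Module.End.one_apply, sub_self]
    have h4 := sub_smul ψA (ψA - 1) m
    rw [hψm, hψ1m, sub_zero] at h4
    have h5 : (ψA - (ψA - 1) : A) = 1 := by abel
    rw [h5, one_smul] at h4
    exact h4
  refine ⟨key1, key2, ?_⟩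
  constructor
  · intro hIJ m hJm
    have hinv : ∀ (w : Module.End ℤ (Fin r → ℤ)) (hw : w ∈ W), wA w hw • m = m := by
      intro w hw
      have hz : (1 - wA w hw) • m = 0 :=
        hJm _ (Submodule.subset_span (Or.inr ⟨w, hw, rfl⟩))
      have h4 := sub_smul (1 : A) (wA w hw) m
      rw [hz, one_smul] at h4
      exact (sub_eq_zero.mp h4.symm).symm
    exact key2 m (hIJ m hinv) hJm
  · intro hJ0 m hinv T hT
    obtain ⟨m1, m2, hm1, hm2, heq⟩ := (key1 m).mp hinv
    have hm20 : m2 = 0 := hJ0 m2 hm2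
    rw [heq, hm20, add_zero]
    exact hm1 T hT
end
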